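/- arXiv:2501.15952 — 3 statements merged into one kernel-verified Lean document; each statement's English description precedes it below -/
import Mathlib

section
/- Let G=(V,E) be a prison-free graph and let F, F' ∈ cmd_4(G) with F∩F' = ∅. Then for every vertex v∈F', the neighborhood N(v) intersects at most one class of F. -/
namespace PrisonFreePaper

variable {V : Type*}

/-- The prison graph on 5 vertices: `K₅` minus the two edges `{4,2}` and `{4,3}`
(which share the vertex `4`).  Thus `{0,1,2,3}` is a 4-clique and the vertex `4`
is adjacent exactly to `0` and `1`. -/
def prison : SimpleGraph (Fin 5) where
  Adj a b := a ≠ b ∧ ¬((a = 4 ∧ (b = 2 ∨ b = 3)) ∨ (b = 4 ∧ (a = 2 ∨ a = 3)))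
  symm := by
    constructor
    rintro a b ⟨h1, h2⟩
    exact ⟨h1.symm, by tauto⟩
  loopless := by
    constructor
    rintro a ⟨h, _⟩
    exact h rfl

/-- `P` is a 5-vertex set inducing a subgraph of `G` isomorphic to the prison. -/
def InducesPrison (G : SimpleGraph V) (P : Set V) : Prop :=
  ∃ f : Fin 5 ↪ V, Set.range f = P ∧ ∀ a b, G.Adj (f a) (f b) ↔ prison.Adj a b

/-- `G` is prison-free: no 5-vertex set induces a prison. -/
def PrisonFree (G : SimpleGraph V) : Prop :=
  ¬ ∃ P : Set V, InducesPrison G P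

/-- `P` is the set of classes witnessing that the induced subgraph `G[F]` is
complete multipartite: the classes are nonempty, pairwise disjoint, their union
is `F`, and two vertices of `F` are adjacent iff they lie in different classes. -/
def IsCMP (G : SimpleGraph V) (F : Set V) (P : Set (Set V)) : Prop :=
  (∀ C ∈ P, C.Nonempty ∧ C ⊆ F) ∧
  (⋃₀ P = F) ∧
  (∀ C ∈ P, ∀ D ∈ P, C ≠ D → Disjoint C D) ∧
  (∀ u ∈ F, ∀ v ∈ F, (G.Adj u v ↔ ¬ ∃ C ∈ P, u ∈ C ∧ v ∈ C))

/-- The induced subgraph `G[F]` is complete multipartite. -/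
def CMP (G : SimpleGraph V) (F : Set V) : Prop := ∃ P, IsCMP G F P

/-- The induced subgraph `G[F]` is complete multipartite with at least `p` classes. -/
def CMPAtLeast (G : SimpleGraph V) (F : Set V) (p : ℕ) : Prop :=
  ∃ P, IsCMP G F P ∧ ∃ f : Fin p ↪ Set V, ∀ i, f i ∈ P

/-- `F ∈ cmd_p` of the induced subgraph of `G` on the ground set `W`:
`F` is an inclusion-wise maximal subset of `W` inducing a complete multipartite
graph with at least `p` classes. -/
def Cmd (G : SimpleGraph V) (W : Set V) (p : ℕ) (F : Set V) : Prop :=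
  F ⊆ W ∧ CMPAtLeast G F p ∧
    ∀ F', F' ⊆ W → F ⊆ F' → CMPAtLeast G F' p → F' = F

/-- The neighbourhood of `v` in `G` intersects at most one class of `P`. -/
def MeetsAtMostOneClass (G : SimpleGraph V) (P : Set (Set V)) (v : V) : Prop :=
  ∀ C ∈ P, ∀ D ∈ P, (∃ x ∈ C, G.Adj v x) → (∃ y ∈ D, G.Adj v y) → C = D

/-- The induced subgraph `G[X]`, viewed as a graph on the same vertex set
(only edges with both endpoints in `X` are kept). -/
def inducedOn (G : SimpleGraph V) (X : Set V) : SimpleGraph V where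
  Adj a b := G.Adj a b ∧ a ∈ X ∧ b ∈ X
  symm := by constructor; rintro a b ⟨h, ha, hb⟩; exact ⟨h.symm, hb, ha⟩
  loopless := by constructor; rintro a ⟨h, _⟩; exact G.ne_of_adj h rfl

/-- The set of edges of `G` with both endpoints in `X`, i.e. the edges of `G[X]`. -/
def edgesWithin (G : SimpleGraph V) (X : Set V) : Set (Sym2 V) :=
  (inducedOn G X).edgeSet

/-- `(G,k)` is a yes-instance of Prison-Free Edge Deletion. -/
def DeletionYes (G : SimpleGraph V) (k : ℕ) : Prop :=
  ∃ A : Set (Sym2 V), A ⊆ G.edgeSet ∧ A.Finite ∧ A.ncard ≤ k ∧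
    PrisonFree (G.deleteEdges A)

/-- `P` is a strict supergraph of a prison in `G`: a 5-vertex set whose induced
subgraph is `K₅` or `K₅` minus one edge (at most one non-adjacent pair). -/
def StrictSupPrison (G : SimpleGraph V) (P : Set V) : Prop :=
  P.ncard = 5 ∧ ∃ u v : V, ∀ x ∈ P, ∀ y ∈ P, x ≠ y → ¬ G.Adj x y →
    (x = u ∧ y = v) ∨ (x = v ∧ y = u)

/-- `P` is a supergraph of a prison in `G`: a 5-vertex set whose induced subgraph
contains a prison on `P` as a spanning subgraph, i.e. all non-adjacent pairs in `P`
are among two pairs sharing a common vertex. -/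
def SupPrison (G : SimpleGraph V) (P : Set V) : Prop :=
  P.ncard = 5 ∧ ∃ w u v : V, ∀ x ∈ P, ∀ y ∈ P, x ≠ y → ¬ G.Adj x y →
    (({x, y} : Set V) = {w, u} ∨ ({x, y} : Set V) = {w, v})

/-- Hypothesis (H1): every edge of `G` that does not have both endpoints in `S`
is contained in a strict supergraph of a prison in `G`. -/
def H1 (G : SimpleGraph V) (S : Set V) : Prop :=
  ∀ u v : V, G.Adj u v → ¬(u ∈ S ∧ v ∈ S) →
    ∃ P, StrictSupPrison G P ∧ u ∈ P ∧ v ∈ P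

/-- Hypothesis (H2): every 5-vertex set inducing a prison in `G` contains at least
two edges with both endpoints in `S`. -/
def H2 (G : SimpleGraph V) (S : Set V) : Prop :=
  ∀ P, InducesPrison G P →
    ∃ e₁ e₂ : Sym2 V, e₁ ≠ e₂ ∧ e₁ ∈ edgesWithin G (P ∩ S) ∧ e₂ ∈ edgesWithin G (P ∩ S)

/-- `B`: the edges of `G−S` lying in no triangle of `G−S`. -/
def BSet (G : SimpleGraph V) (S : Set V) : Set (Sym2 V) :=
  {e ∈ edgesWithin G Sᶜ | ¬ ∃ w ∈ Sᶜ, ∀ x ∈ e, G.Adj w x}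

/-- `B_e` for the edge `e = ab` of `G[S]`: the edges of `B` both of whose endpoints
are adjacent in `G` to both `a` and `b`. -/
def BOf (G : SimpleGraph V) (S : Set V) (a b : V) : Set (Sym2 V) :=
  {f ∈ BSet G S | ∀ x ∈ f, G.Adj x a ∧ G.Adj x b}

/-- `V(B_e)`: the set of endpoints of the edges of `B_e`. -/
def BVerts (G : SimpleGraph V) (S : Set V) (a b : V) : Set V :=
  {x | ∃ f ∈ BOf G S a b, x ∈ f}

/-- The graph `G ∪ A` obtained by adding the pairs in `A` as edges. -/
def addEdges (G : SimpleGraph V) (A : Set (Sym2 V)) : SimpleGraph V :=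
  G ⊔ SimpleGraph.fromEdgeSet A

/-- `A` is a prison-free completion set for `G`: a set of non-edges (unordered
pairs of distinct vertices not adjacent in `G`) whose addition makes `G` prison-free. -/
def CompletionSet (G : SimpleGraph V) (A : Set (Sym2 V)) : Prop :=
  (∀ e ∈ A, ¬ e.IsDiag) ∧ (∀ e ∈ A, e ∉ G.edgeSet) ∧ PrisonFree (addEdges G A)

/-- `A` is a minimal prison-free completion set for `G`. -/
def MinCompletionSet (G : SimpleGraph V) (A : Set (Sym2 V)) : Prop :=
  CompletionSet G A ∧ ∀ A' ⊂ A, ¬ CompletionSet G A'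

/-- `A` is a solution to the instance `(G,k)` of Prison-Free Edge Completion:
a prison-free completion set of size at most `k`. -/
def Solution (G : SimpleGraph V) (k : ℕ) (A : Set (Sym2 V)) : Prop :=
  CompletionSet G A ∧ A.Finite ∧ A.ncard ≤ k

/-- `A` is a minimal solution to `(G,k)`: a solution no proper subset of which is a
prison-free completion set. -/
def MinSolution (G : SimpleGraph V) (k : ℕ) (A : Set (Sym2 V)) : Prop :=
  Solution G k A ∧ ∀ A' ⊂ A, ¬ CompletionSet G A'

/-- `K` is a set of 4 vertices inducing a complete graph `K₄` in `G`. -/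
def IsK4 (G : SimpleGraph V) (K : Set V) : Prop :=
  K.ncard = 4 ∧ ∀ u ∈ K, ∀ v ∈ K, u ≠ v → G.Adj u v

/-- The modulator property of the set `S` (output of the sunflower-based
Lemma): for every prison `P` in `G` and every edge set `A ⊆ E(G)` with `|A| ≤ k`,
if deleting `A` from `G[S]` yields a prison-free graph then `A` contains an edge
of `G[P]`. -/
def GoodModulator (G : SimpleGraph V) (k : ℕ) (S : Set V) : Prop :=
  ∀ P : Set V, InducesPrison G P →
    ∀ A : Set (Sym2 V), A ⊆ G.edgeSet → A.Finite → A.ncard ≤ k →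
      PrisonFree ((inducedOn G S).deleteEdges A) →
      ∃ e ∈ A, e ∈ edgesWithin G P

/-- Hypothesis (H3): for every `F' ∈ cmd₃(G−S)` and every inclusion-wise maximal
set `F ⊇ F'` such that `G[F]` is complete multipartite, some vertex outside `F`
has neighbours in at least two classes of `F`. -/
def H3 (G : SimpleGraph V) (S : Set V) : Prop :=
  ∀ F', Cmd G Sᶜ 3 F' → ∀ F : Set V, F' ⊆ F → CMP G F →
    (∀ F'', F ⊆ F'' → CMP G F'' → F'' = F) →
    ∃ v ∉ F, ∃ P, IsCMP G F P ∧
      ∃ C ∈ P, ∃ D ∈ P, C ≠ D ∧ (∃ x ∈ C, G.Adj v x) ∧ ∃ y ∈ D, G.Adj v y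

/-- `F` is an inclusion-wise maximal subset of `W` inducing a complete
multipartite subgraph of `G`. -/
def MaxCMPon (G : SimpleGraph V) (W F : Set V) : Prop :=
  F ⊆ W ∧ CMP G F ∧ ∀ F'', F'' ⊆ W → F ⊆ F'' → CMP G F'' → F'' = F


/-
Let `v ∉ F` see two classes of `F`. If a class `M` contained a neighbour `s` and a non-neighbour
`t` of `v`, take a neighbour `o` of `v` in another class and vertices `k`, `l` of two further
classes: either `v` sees `k` (or `l`), and `{o, k, s, v}` with `t` is a prison, or it sees
neither, and `{s, o, k, l}` with `v` is one. So every class lies inside or outside `N(v)`, and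
two classes outside `N(v)` would again give a prison with two neighbours of `v`. Hence the
non-neighbours of `v` in `F` form at most one class, and `v` can be added to `F`, to that class
or as a new one, contradicting maximality.
-/

theorem PrisonFree.adj_or_adj {G : SimpleGraph V} (hG : PrisonFree G) {a b c d e : V}
    (hab : G.Adj a b) (hac : G.Adj a c) (had : G.Adj a d)
    (hbc : G.Adj b c) (hbd : G.Adj b d) (hcd : G.Adj c d)
    (hea : G.Adj e a) (heb : G.Adj e b) (hec : e ≠ c) (hed : e ≠ d) :
    G.Adj e c ∨ G.Adj e d := by
  by_contra! ⟨hnec, hned⟩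
  have hinj : Function.Injective ![a, b, c, d, e] := by
    have := hab.ne; have := hac.ne; have := had.ne; have := hbc.ne; have := hbd.ne
    have := hcd.ne; have := hea.ne; have := heb.ne
    intro i j hij
    fin_cases i <;> fin_cases j <;> simp_all [eq_comm]
  refine hG ⟨_, ⟨![a, b, c, d, e], hinj⟩, rfl, fun i j => ?_⟩
  have := hab.symm; have := hac.symm; have := had.symm; have := hbc.symm; have := hbd.symm
  have := hcd.symm; have := hea.symm; have := heb.symm
  have : ¬ G.Adj c e := fun h => hnec h.symm
  have : ¬ G.Adj d e := fun h => hned h.symm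
  fin_cases i <;> fin_cases j <;> simp [prison, *]

theorem exists_pair_ne_of_embedding_fin_four {α : Type*} {S : Set α}
    (h4 : ∃ f : Fin 4 ↪ α, ∀ i, f i ∈ S) (a b : α) :
    ∃ c ∈ S, ∃ d ∈ S, c ≠ d ∧ c ≠ a ∧ c ≠ b ∧ d ≠ a ∧ d ≠ b := by
  classical
  obtain ⟨f, hf⟩ := h4
  have hcard : 1 < ((Finset.univ.map f) \ {a, b}).card := by
    have := Finset.le_card_sdiff {a, b} (Finset.univ.map f)
    have := Finset.card_le_two (a := a) (b := b)
    simp only [Finset.card_map, Finset.card_univ, Fintype.card_fin] at *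
    omega
  obtain ⟨c, hc, d, hd, hcd⟩ := Finset.one_lt_card.mp hcard
  simp only [Finset.mem_sdiff, Finset.mem_map, Finset.mem_univ, true_and, Finset.mem_insert,
    Finset.mem_singleton, not_or] at hc hd
  obtain ⟨⟨i, rfl⟩, hca, hcb⟩ := hc
  obtain ⟨⟨j, rfl⟩, hda, hdb⟩ := hd
  exact ⟨f i, hf i, f j, hf j, hcd, hca, hcb, hda, hdb⟩

namespace IsCMP

variable {G : SimpleGraph V} {F : Set V} {P : Set (Set V)}

theorem exists_mem (hP : IsCMP G F P) {w : V} (hw : w ∈ F) : ∃ E ∈ P, w ∈ E := by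
  rw [← hP.2.1] at hw
  exact hw

theorem adj_iff_not_mem (hP : IsCMP G F P) {E : Set V} (hE : E ∈ P) {u w : V} (hu : u ∈ E)
    (hw : w ∈ F) : G.Adj u w ↔ w ∉ E := by
  rw [hP.2.2.2 u ((hP.1 E hE).2 hu) w hw]
  refine ⟨fun h hwE => h ⟨E, hE, hu, hwE⟩, fun hwE ⟨K, hK, huK, hwK⟩ => hwE ?_⟩
  obtain rfl : K = E := by
    by_contra hne
    exact Set.disjoint_left.mp (hP.2.2.1 K hK E hE hne) huK hu
  exact hwK

theorem not_adj_of_mem (hP : IsCMP G F P) {E : Set V} (hE : E ∈ P) {u w : V} (hu : u ∈ E)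
    (hw : w ∈ E) : ¬ G.Adj u w :=
  fun h => (hP.adj_iff_not_mem hE hu ((hP.1 E hE).2 hw)).mp h hw

theorem adj_of_ne (hP : IsCMP G F P) {E E' : Set V} (hE : E ∈ P) (hE' : E' ∈ P) (hne : E ≠ E')
    {u w : V} (hu : u ∈ E) (hw : w ∈ E') : G.Adj u w :=
  (hP.adj_iff_not_mem hE hu ((hP.1 E' hE').2 hw)).mpr
    fun hwE => hne (by_contra fun h => Set.disjoint_left.mp (hP.2.2.1 E hE E' hE' h) hwE hw)

theorem of_adj_iff_not_mem (hcls : ∀ C ∈ P, C.Nonempty ∧ C ⊆ F) (hcover : ⋃₀ P = F)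
    (hdisj : ∀ C ∈ P, ∀ D ∈ P, C ≠ D → Disjoint C D)
    (hadj : ∀ E ∈ P, ∀ u ∈ E, ∀ w ∈ F, G.Adj u w ↔ w ∉ E) : IsCMP G F P := by
  refine ⟨hcls, hcover, hdisj, fun u hu w hw => ?_⟩
  obtain ⟨E, hE, huE⟩ : ∃ E ∈ P, u ∈ E := by rw [← hcover] at hu; exact hu
  rw [hadj E hE u huE w hw]
  refine ⟨fun hwE ⟨K, hK, huK, hwK⟩ => hwE ?_, fun h hwE => h ⟨E, hE, huE, hwE⟩⟩
  obtain rfl : K = E := by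
    by_contra hne
    exact Set.disjoint_left.mp (hdisj K hK E hE hne) huK huE
  exact hwK

theorem unique (hP : IsCMP G F P) {Q : Set (Set V)} (hQ : IsCMP G F Q) : P = Q := by
  suffices h : ∀ {P Q : Set (Set V)}, IsCMP G F P → IsCMP G F Q → P ⊆ Q from
    (h hP hQ).antisymm (h hQ hP)
  intro P Q hP hQ E hE
  obtain ⟨u, hu⟩ := (hP.1 E hE).1
  obtain ⟨E', hE', huE'⟩ := hQ.exists_mem ((hP.1 E hE).2 hu)
  convert hE' using 1
  ext w
  by_cases hw : w ∈ F
  · rw [← not_iff_not, ← hP.adj_iff_not_mem hE hu hw, ← hQ.adj_iff_not_mem hE' huE' hw]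
  · exact iff_of_false (fun h => hw ((hP.1 E hE).2 h)) (fun h => hw ((hQ.1 E' hE').2 h))

/-- With `B = ∅` the vertex `v` forms a new class; with `B ∈ P` it joins the class `B`. -/
theorem insert_vertex (hP : IsCMP G F P) {v : V} (hv : v ∉ F) {B : Set V} (hB : B ∈ P ∨ B = ∅)
    (hvadj : ∀ w ∈ F, G.Adj v w ↔ w ∉ B) :
    IsCMP G (insert v F) (insert (insert v B) (P \ {B})) := by
  have hBF : B ⊆ F := by
    rcases hB with hB | rfl
    exacts [(hP.1 B hB).2, Set.empty_subset F]
  have hBdisj : ∀ E ∈ P, E ≠ B → Disjoint B E := by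
    rcases hB with hB | rfl
    exacts [fun E hE hEB => hP.2.2.1 B hB E hE hEB.symm, fun E _ _ => Set.empty_disjoint E]
  have hvE : ∀ E ∈ P, v ∉ E := fun E hE h => hv ((hP.1 E hE).2 h)
  refine of_adj_iff_not_mem ?_ ?_ ?_ ?_
  · rintro E (rfl | ⟨hE, -⟩)
    · exact ⟨Set.insert_nonempty v B, Set.insert_subset_insert hBF⟩
    · exact ⟨(hP.1 E hE).1, (hP.1 E hE).2.trans (Set.subset_insert v F)⟩
  · rw [Set.sUnion_insert, Set.insert_union, ← Set.sUnion_insert, Set.insert_sdiff_singleton,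
      Set.sUnion_insert, hP.2.1, Set.union_eq_right.mpr hBF]
  · rintro E (rfl | ⟨hE, hEB⟩) E' (rfl | ⟨hE', hE'B⟩) hne
    · exact absurd rfl hne
    · exact Set.disjoint_insert_left.mpr ⟨hvE E' hE', hBdisj E' hE' hE'B⟩
    · exact Set.disjoint_insert_right.mpr ⟨hvE E hE, (hBdisj E hE hEB).symm⟩
    · exact hP.2.2.1 E hE E' hE' hne
  · rintro E (rfl | ⟨hE, hEB⟩) u hu w (rfl | hw)
    · rcases hu with rfl | hu
      · simp
      · simp [G.adj_comm u, hvadj u (hBF hu), hu]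
    · rcases hu with rfl | hu
      · simp [hvadj w hw, show w ≠ u from fun h => hv (h ▸ hw)]
      · simp [hP.adj_iff_not_mem (hB.resolve_right (Set.nonempty_of_mem hu).ne_empty) hu hw,
          show w ≠ v from fun h => hv (h ▸ hw)]
    · simp [G.adj_comm u, hvadj u ((hP.1 E hE).2 hu), hvE E hE,
        Set.disjoint_left.mp (hBdisj E hE hEB).symm hu]
    · simpa using hP.adj_iff_not_mem hE hu hw

theorem cmpAtLeast_insert (hP : IsCMP G F P) {p : ℕ} (hp : ∃ f : Fin p ↪ Set V, ∀ i, f i ∈ P)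
    {v : V} (hv : v ∉ F) {B : Set V} (hB : B ∈ P ∨ B = ∅)
    (hvadj : ∀ w ∈ F, G.Adj v w ↔ w ∉ B) : CMPAtLeast G (insert v F) p := by
  classical
  obtain ⟨f, hf⟩ := hp
  let g : Set V → Set V := fun E => if E = B then insert v B else E
  have hvE : ∀ E ∈ P, v ∉ E := fun E hE h => hv ((hP.1 E hE).2 h)
  have hg : Set.InjOn g P := by
    intro E hE E' hE' h
    by_cases hEB : E = B <;> by_cases hE'B : E' = B <;> simp only [g, hEB, hE'B, if_true,
      if_false] at h
    · exact hEB.trans hE'B.symm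
    · exact absurd (h ▸ Set.mem_insert v B) (hvE E' hE')
    · exact absurd (h ▸ Set.mem_insert v B) (hvE E hE)
    · exact h
  refine ⟨_, hP.insert_vertex hv hB hvadj, ⟨g ∘ f, fun i j h => f.injective (hg (hf i) (hf j) h)⟩,
    fun i => ?_⟩
  change g (f i) ∈ _
  by_cases hi : f i = B
  · simp only [g, if_pos hi, Set.mem_insert]
  · simp only [g, if_neg hi]
    exact Set.mem_insert_of_mem _ ⟨hf i, hi⟩

end IsCMP

section

variable {G : SimpleGraph V} {F : Set V} {P : Set (Set V)} {v : V}

theorem PrisonFree.adj_of_adj_of_not_adj (hG : PrisonFree G) (hP : IsCMP G F P)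
    (h4 : ∃ f : Fin 4 ↪ Set V, ∀ i, f i ∈ P) (hv : v ∉ F) {C D : Set V} (hC : C ∈ P)
    (hD : D ∈ P) (hCD : C ≠ D) {x y : V} (hx : x ∈ C) (hy : y ∈ D) (hvx : G.Adj v x)
    (hvy : G.Adj v y) {s t : V} (hs : s ∈ F) (ht : t ∈ F) (hvs : G.Adj v s)
    (hvt : ¬ G.Adj v t) : G.Adj s t := by
  by_contra hst
  obtain ⟨M, hM, hsM⟩ := hP.exists_mem hs
  have htM : t ∈ M := by_contra fun h => hst ((hP.adj_iff_not_mem hM hsM ht).mpr h)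
  obtain ⟨O, hO, hOM, o, hoO, hvo⟩ : ∃ O ∈ P, O ≠ M ∧ ∃ o ∈ O, G.Adj v o := by
    by_cases hCM : C = M
    · exact ⟨D, hD, fun h => hCD (hCM.trans h.symm), y, hy, hvy⟩
    · exact ⟨C, hC, hCM, x, hx, hvx⟩
  have hos := hP.adj_of_ne hO hM hOM hoO hsM
  have hto : G.Adj t o := hP.adj_of_ne hM hO hOM.symm htM hoO
  have hnbr : ∀ K ∈ P, K ≠ M → K ≠ O → ∀ k ∈ K, ¬ G.Adj v k := by
    intro K hK hKM hKO k hk hvk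
    have hok := hP.adj_of_ne hO hK (Ne.symm hKO) hoO hk
    have hks := hP.adj_of_ne hK hM hKM hk hsM
    have htk := hP.adj_of_ne hM hK (Ne.symm hKM) htM hk
    rcases hG.adj_or_adj hok hos hvo.symm hks hvk.symm hvs.symm hto htk
        (fun h => hvt (h ▸ hvs)) (fun h => hv (h ▸ ht)) with h | h
    exacts [hst h.symm, hvt h.symm]
  obtain ⟨K, hK, L, hL, hKL, hKM, hKO, hLM, hLO⟩ := exists_pair_ne_of_embedding_fin_four h4 M O
  obtain ⟨k, hk⟩ := (hP.1 K hK).1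
  obtain ⟨l, hl⟩ := (hP.1 L hL).1
  have hkF := (hP.1 K hK).2 hk
  have hlF := (hP.1 L hL).2 hl
  rcases hG.adj_or_adj hos.symm (hP.adj_of_ne hM hK (Ne.symm hKM) hsM hk)
      (hP.adj_of_ne hM hL (Ne.symm hLM) hsM hl) (hP.adj_of_ne hO hK (Ne.symm hKO) hoO hk)
      (hP.adj_of_ne hO hL (Ne.symm hLO) hoO hl) (hP.adj_of_ne hK hL hKL hk hl) hvs hvo
      (fun h => hv (h ▸ hkF)) (fun h => hv (h ▸ hlF)) with h | h
  exacts [hnbr K hK hKM hKO k hk h, hnbr L hL hLM hLO l hl h]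

theorem PrisonFree.meetsAtMostOneClass_of_not_cmpAtLeast_insert (hG : PrisonFree G)
    (hP : IsCMP G F P) (h4 : ∃ f : Fin 4 ↪ Set V, ∀ i, f i ∈ P) (hv : v ∉ F)
    (hmax : ¬ CMPAtLeast G (insert v F) 4) : MeetsAtMostOneClass G P v := by
  rintro C hC D hD ⟨x, hx, hvx⟩ ⟨y, hy, hvy⟩
  by_contra hCD
  have hsep : ∀ {s t : V}, s ∈ F → t ∈ F → G.Adj v s → ¬ G.Adj v t → G.Adj s t :=
    hG.adj_of_adj_of_not_adj hP h4 hv hC hD hCD hx hy hvx hvy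
  have hxF := (hP.1 C hC).2 hx
  have hyF := (hP.1 D hD).2 hy
  let B : Set V := {w ∈ F | ¬ G.Adj v w}
  have hB : B ∈ P ∨ B = ∅ := by
    rcases B.eq_empty_or_nonempty with h | ⟨t, htF, hvt⟩
    · exact Or.inr h
    obtain ⟨E, hE, htE⟩ := hP.exists_mem htF
    have hEB : E = B := by
      ext w
      refine ⟨fun hw => ⟨(hP.1 E hE).2 hw, fun hvw => ?_⟩, fun hw => ?_⟩
      · exact hP.not_adj_of_mem hE hw htE (hsep ((hP.1 E hE).2 hw) htF hvw hvt)
      · by_contra hwE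
        have htw := (hP.adj_iff_not_mem hE htE hw.1).mpr hwE
        rcases hG.adj_or_adj (hP.adj_of_ne hC hD hCD hx hy) (hsep hxF htF hvx hvt)
            (hsep hxF hw.1 hvx hw.2) (hsep hyF htF hvy hvt) (hsep hyF hw.1 hvy hw.2) htw hvx hvy
            (fun h => hv (h ▸ htF)) (fun h => hv (h ▸ hw.1)) with h | h
        exacts [hvt h, hw.2 h]
    exact Or.inl (hEB ▸ hE)
  exact hmax (hP.cmpAtLeast_insert h4 hv hB fun w hw => by simp [B, hw])

end

theorem cmd4_disjoint_structure_general {V : Type*} (G : SimpleGraph V)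
    (hG : PrisonFree G) (F F' : Set V)
    (hF : Cmd G Set.univ 4 F)
    (hdisj : F ∩ F' = ∅) :
    ∀ v ∈ F', ∀ P : Set (Set V), IsCMP G F P → MeetsAtMostOneClass G P v := by
  intro v hv' P hP
  have hv : v ∉ F := fun hv => (Set.eq_empty_iff_forall_notMem.mp hdisj) v ⟨hv, hv'⟩
  obtain ⟨-, ⟨P₀, hP₀, h4⟩, hmax⟩ := hF
  rw [hP₀.unique hP] at h4
  refine hG.meetsAtMostOneClass_of_not_cmpAtLeast_insert hP h4 hv fun hext => hv ?_
  rw [← hmax _ (Set.subset_univ _) (Set.subset_insert v F) hext]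
  exact Set.mem_insert v F

/-- In a prison-free graph `G`, if `F, F' ∈ cmd₄(G)` are disjoint,
then every `v ∈ F'` has neighbours in at most one class of `F`. -/
theorem cmd4_disjoint_structure {V : Type*} [Fintype V] (G : SimpleGraph V)
    (hG : PrisonFree G) (F F' : Set V)
    (hF : Cmd G Set.univ 4 F) (hF' : Cmd G Set.univ 4 F')
    (hdisj : F ∩ F' = ∅) :
    ∀ v ∈ F', ∀ P : Set (Set V), IsCMP G F P → MeetsAtMostOneClass G P v :=
  cmd4_disjoint_structure_general G hG F F' hF hdisj

end PrisonFreePaper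
end

section
/- Let G be a graph and S⊆V(G) a set satisfying (H1) and (H2). Let P be a supergraph of a prison in G that contains an edge with both endpoints in F for some F ∈ cmd_3(G−S). Then P ⊆ S∪F. -/
namespace PrisonFreePaper

variable {V : Type*}

/-! By (H2) an induced prison has at most two vertices outside `S`; with (H1) this makes every
triangle outside `S` part of a `K₄`. Non-adjacency is an equivalence relation on `F`, and by
the maximality of `F` a vertex `z ∉ S ∪ F` either splits a class of `F` or misses two of its
classes. Playing these facts against each other, `z` cannot be adjacent to both ends of an edge
of `F`. If a supergraph `P` of a prison contains `z` and an edge `xy` of `F`, it has three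
vertices outside `S`, so `P` is `K₅` minus at most one edge and `z` is adjacent to `y`, say, but
not to `x`. A vertex `c` of a third class of `F` is then non-adjacent to `z`, and `c` together
with `P` contains an induced prison with three vertices outside `S`. -/

section Prisons

variable {G : SimpleGraph V} {S : Set V}

theorem inducesPrison_of_adj {a b c d e : V}
    (hab : G.Adj a b) (hac : G.Adj a c) (had : G.Adj a d)
    (hbc : G.Adj b c) (hbd : G.Adj b d) (hcd : G.Adj c d)
    (hea : G.Adj e a) (heb : G.Adj e b) (hec : ¬ G.Adj e c) (hed : ¬ G.Adj e d)
    (hec' : e ≠ c) (hed' : e ≠ d) :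
    InducesPrison G {a, b, c, d, e} := by
  have := hab.ne; have := hac.ne; have := had.ne; have := hbc.ne; have := hbd.ne
  have := hcd.ne; have := hea.ne; have := heb.ne
  refine ⟨⟨![a, b, c, d, e], fun i j hij => ?_⟩, ?_, fun i j => ?_⟩
  · fin_cases i <;> fin_cases j <;> simp_all [eq_comm]
  · change Set.range ![a, b, c, d, e] = _
    simp [Set.range, Fin.exists_fin_succ, Set.ext_iff, eq_comm]
  · change G.Adj (![a, b, c, d, e] i) (![a, b, c, d, e] j) ↔ _
    fin_cases i <;> fin_cases j <;> simp_all [prison, G.adj_comm, eq_comm]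

theorem H2.ncard_diff_le_two (h2 : H2 G S) {Q : Set V} (hQ : InducesPrison G Q) :
    (Q \ S).ncard ≤ 2 := by
  have hQ5 : Q.ncard = 5 := by
    obtain ⟨f, rfl, -⟩ := hQ
    simp [Set.ncard_range_of_injective f.injective]
  have hQfin : Q.Finite := Set.finite_of_ncard_pos (by omega)
  obtain ⟨e₁, e₂, hne, he₁, he₂⟩ := h2 Q hQ
  induction e₁ using Sym2.ind with | _ a b => ?_
  induction e₂ using Sym2.ind with | _ c d => ?_
  obtain ⟨hab, ha, hb⟩ := he₁
  obtain ⟨hcd, hc, hd⟩ := he₂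
  have h3 : 2 < (Q ∩ S).ncard := by
    rw [Set.two_lt_ncard_iff (hQfin.inter_of_left S)]
    by_cases hc' : c = a ∨ c = b
    · by_cases hd' : d = a ∨ d = b
      · rcases hc' with rfl | rfl <;> rcases hd' with rfl | rfl <;> simp_all [Sym2.eq_swap]
      · exact ⟨a, b, d, ha, hb, hd, hab.ne, by tauto, by tauto⟩
    · exact ⟨a, b, c, ha, hb, hc, hab.ne, by tauto, by tauto⟩
  have := Set.ncard_inter_add_ncard_sdiff_eq_ncard Q S hQfin
  omega

theorem H2.false_of_three_not_mem (h2 : H2 G S) {Q : Set V} (hQ : InducesPrison G Q)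
    {x y z : V} (hxS : x ∉ S) (hyS : y ∉ S) (hzS : z ∉ S) (hxy : x ≠ y) (hxz : x ≠ z)
    (hyz : y ≠ z) (hx : x ∈ Q := by simp) (hy : y ∈ Q := by simp) (hz : z ∈ Q := by simp) :
    False := by
  have hQfin : Q.Finite := by
    obtain ⟨f, rfl, -⟩ := hQ
    exact Set.finite_range f
  exact (h2.ncard_diff_le_two hQ).not_gt <|
    (Set.two_lt_ncard_iff hQfin.sdiff).2
      ⟨x, y, z, ⟨hx, hxS⟩, ⟨hy, hyS⟩, ⟨hz, hzS⟩, hxy, hxz, hyz⟩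

theorem inducesPrison_of_nonadj_nonadj {P : Set V} (hP5 : P.ncard = 5) {w u v : V}
    (hw : w ∈ P) (hu : u ∈ P) (hv : v ∈ P) (hwu : w ≠ u) (hwv : w ≠ v) (huv : u ≠ v)
    (hnu : ¬ G.Adj w u) (hnv : ¬ G.Adj w v)
    (hrule : ∀ x ∈ P, ∀ y ∈ P, x ≠ y → ¬ G.Adj x y →
      s(x, y) = s(w, u) ∨ s(x, y) = s(w, v)) :
    InducesPrison G P := by
  have h3 : ({w, u, v} : Set V).ncard = 3 := Set.ncard_eq_three.2 ⟨w, u, v, hwu, hwv, huv, rfl⟩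
  have hsub : ({w, u, v} : Set V) ⊆ P := by simp [Set.insert_subset_iff, hw, hu, hv]
  obtain ⟨p, q, hpq, hPpq⟩ := Set.ncard_eq_two.1 <| show (P \ {w, u, v}).ncard = 2 by
    rw [Set.ncard_sdiff hsub, hP5, h3]
  have hp : p ∈ P \ {w, u, v} := hPpq ▸ Set.mem_insert p {q}
  have hq : q ∈ P \ {w, u, v} := hPpq ▸ Set.mem_insert_of_mem p rfl
  have hP : P = {p, q, u, v, w} := by
    rw [← Set.sdiff_union_of_subset hsub, hPpq]
    ext x
    simp only [Set.mem_union, Set.mem_insert_iff, Set.mem_singleton_iff]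
    tauto
  simp only [Set.mem_sdiff, Set.mem_insert_iff, Set.mem_singleton_iff, not_or] at hp hq
  have hadj : ∀ x ∈ P, ∀ y ∈ P, x ≠ y → x ≠ w → y ≠ w → G.Adj x y := by
    intro x hx y hy hxy hxw hyw
    by_contra h
    rcases hrule x hx y hy hxy h with e | e <;>
      rcases Sym2.eq_iff.1 e with ⟨rfl, -⟩ | ⟨-, rfl⟩ <;> contradiction
  have hadj_w : ∀ x ∈ P, x ≠ w → x ≠ u → x ≠ v → G.Adj w x := by
    intro x hx hxw hxu hxv
    by_contra h
    rcases hrule w hw x hx (Ne.symm hxw) h with e | e <;>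
      rcases Sym2.eq_iff.1 e with ⟨-, rfl⟩ | ⟨-, rfl⟩ <;> contradiction
  rw [hP]
  exact inducesPrison_of_adj (hadj p hp.1 q hq.1 hpq hp.2.1 hq.2.1)
    (hadj p hp.1 u hu hp.2.2.1 hp.2.1 hwu.symm) (hadj p hp.1 v hv hp.2.2.2 hp.2.1 hwv.symm)
    (hadj q hq.1 u hu hq.2.2.1 hq.2.1 hwu.symm) (hadj q hq.1 v hv hq.2.2.2 hq.2.1 hwv.symm)
    (hadj u hu v hv huv hwu.symm hwv.symm) (hadj_w p hp.1 hp.2.1 hp.2.2.1 hp.2.2.2)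
    (hadj_w q hq.1 hq.2.1 hq.2.2.1 hq.2.2.2) hnu hnv hwu hwv

theorem SupPrison.inducesPrison_of_nonadj {P : Set V} (hP : SupPrison G P) {a b c d : V}
    (ha : a ∈ P) (hb : b ∈ P) (hc : c ∈ P) (hd : d ∈ P) (hab : a ≠ b) (hcd : c ≠ d)
    (hnab : ¬ G.Adj a b) (hncd : ¬ G.Adj c d) (hne : s(a, b) ≠ s(c, d)) :
    InducesPrison G P := by
  obtain ⟨hP5, w, u, v, hrule⟩ := hP
  replace hrule : ∀ x ∈ P, ∀ y ∈ P, x ≠ y → ¬ G.Adj x y →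
      s(x, y) = s(w, u) ∨ s(x, y) = s(w, v) := by
    simpa only [Set.pair_eq_pair_iff, ← Sym2.eq_iff] using hrule
  have hnonadj : ∀ {x y x' y' : V}, x ∈ P → y ∈ P → x ≠ y → ¬ G.Adj x y →
      s(x, y) = s(x', y') →
      x' ∈ P ∧ y' ∈ P ∧ x' ≠ y' ∧ ¬ G.Adj x' y' := by
    intro x y x' y' hx hy hxy h e
    rcases Sym2.eq_iff.1 e with ⟨rfl, rfl⟩ | ⟨rfl, rfl⟩
    · exact ⟨hx, hy, hxy, h⟩
    · exact ⟨hy, hx, hxy.symm, fun h' => h h'.symm⟩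
  rcases hrule a ha b hb hab hnab with e₁ | e₁ <;>
    rcases hrule c hc d hd hcd hncd with e₂ | e₂
  · exact absurd (e₁.trans e₂.symm) hne
  · obtain ⟨hw, hu, hwu, hnu⟩ := hnonadj ha hb hab hnab e₁
    obtain ⟨-, hv, hwv, hnv⟩ := hnonadj hc hd hcd hncd e₂
    refine inducesPrison_of_nonadj_nonadj hP5 hw hu hv hwu hwv ?_ hnu hnv hrule
    rintro rfl
    exact hne (e₁.trans e₂.symm)
  · obtain ⟨hw, hv, hwv, hnv⟩ := hnonadj ha hb hab hnab e₁
    obtain ⟨-, hu, hwu, hnu⟩ := hnonadj hc hd hcd hncd e₂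
    refine inducesPrison_of_nonadj_nonadj hP5 hw hv hu hwv hwu ?_ hnv hnu
      fun x hx y hy hxy h => (hrule x hx y hy hxy h).symm
    rintro rfl
    exact hne (e₁.trans e₂.symm)
  · exact absurd (e₁.trans e₂.symm) hne

theorem StrictSupPrison.exists_adj {Q : Set V} (hQ : StrictSupPrison G Q) {a b : V}
    (ha : a ∈ Q) (hb : b ∈ Q) (hab : G.Adj a b) :
    ∃ s ∈ Q, ∃ t ∈ Q,
      G.Adj a s ∧ G.Adj a t ∧ G.Adj b s ∧ G.Adj b t ∧ G.Adj s t := by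
  obtain ⟨hQ5, u, v, huv⟩ := hQ
  have hR : (Q \ {a, b}).ncard = 3 := by
    rw [Set.ncard_sdiff (by simp [Set.insert_subset_iff, ha, hb]), hQ5, Set.ncard_pair hab.ne]
  have hab' : ∀ x ∈ Q, x ∉ Q \ {a, b} → x = a ∨ x = b := by
    intro x hx hxR
    simpa only [Set.mem_sdiff, hx, true_and, Set.mem_insert_iff, Set.mem_singleton_iff,
      not_not] using hxR
  -- `Q \ {r}` is then a 4-clique containing `a` and `b`
  obtain ⟨r, hr, hcover⟩ : ∃ r ∈ Q \ {a, b},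
      ∀ x ∈ Q, ∀ y ∈ Q, x ≠ y → ¬ G.Adj x y → x = r ∨ y = r := by
    by_cases hu : u ∈ Q \ {a, b}
    · refine ⟨u, hu, fun x hx y hy hxy h => ?_⟩
      rcases huv x hx y hy hxy h with ⟨rfl, -⟩ | ⟨-, rfl⟩ <;> simp
    by_cases hv : v ∈ Q \ {a, b}
    · refine ⟨v, hv, fun x hx y hy hxy h => ?_⟩
      rcases huv x hx y hy hxy h with ⟨-, rfl⟩ | ⟨rfl, -⟩ <;> simp
    obtain ⟨r, hr⟩ := Set.nonempty_of_ncard_ne_zero (s := Q \ {a, b}) (by omega)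
    refine ⟨r, hr, fun x hx y hy hxy h => absurd ?_ h⟩
    have hxy' : (x = a ∨ x = b) ∧ (y = a ∨ y = b) := by
      rcases huv x hx y hy hxy h with ⟨rfl, rfl⟩ | ⟨rfl, rfl⟩
      exacts [⟨hab' x hx hu, hab' y hy hv⟩, ⟨hab' x hx hv, hab' y hy hu⟩]
    rcases hxy' with ⟨rfl | rfl, rfl | rfl⟩
    exacts [absurd rfl hxy, hab, hab.symm, absurd rfl hxy]
  obtain ⟨s, t, hst, hst'⟩ := Set.ncard_eq_two.1 <| show ((Q \ {a, b}) \ {r}).ncard = 2 by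
    rw [Set.ncard_sdiff (Set.singleton_subset_iff.2 hr), hR, Set.ncard_singleton]
  have hs : s ∈ (Q \ {a, b}) \ {r} := hst' ▸ Set.mem_insert s {t}
  have ht : t ∈ (Q \ {a, b}) \ {r} := hst' ▸ Set.mem_insert_of_mem s rfl
  have hclique : ∀ x ∈ Q, ∀ y ∈ Q, x ≠ y → x ≠ r → y ≠ r → G.Adj x y := by
    intro x hx y hy hxy hxr hyr
    by_contra h
    rcases hcover x hx y hy hxy h with h | h <;> contradiction
  simp only [Set.mem_sdiff, Set.mem_insert_iff, Set.mem_singleton_iff, not_or] at hr hs ht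
  exact ⟨s, hs.1.1, t, ht.1.1, hclique a ha s hs.1.1 (Ne.symm hs.1.2.1) (Ne.symm hr.2.1) hs.2,
    hclique a ha t ht.1.1 (Ne.symm ht.1.2.1) (Ne.symm hr.2.1) ht.2,
    hclique b hb s hs.1.1 (Ne.symm hs.1.2.2) (Ne.symm hr.2.2) hs.2,
    hclique b hb t ht.1.1 (Ne.symm ht.1.2.2) (Ne.symm hr.2.2) ht.2,
    hclique s hs.1.1 t ht.1.1 hst hs.2 ht.2⟩

end Prisons

section CompleteMultipartite

variable {G : SimpleGraph V} {X F W : Set V} {p : ℕ}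

theorem isCompleteMultipartite_induce_iff :
    (G.induce X).IsCompleteMultipartite ↔
      ∀ u ∈ X, ∀ v ∈ X, ∀ w ∈ X, ¬ G.Adj u v → ¬ G.Adj v w → ¬ G.Adj u w :=
  ⟨fun h u hu v hv w hw => h.trans ⟨u, hu⟩ ⟨v, hv⟩ ⟨w, hw⟩,
    fun h => ⟨fun u v w => h u u.2 v v.2 w w.2⟩⟩

theorem IsCMP.eq_of_mem {P : Set (Set V)} (hP : IsCMP G X P) {C D : Set V} (hC : C ∈ P)
    (hD : D ∈ P) {v : V} (hvC : v ∈ C) (hvD : v ∈ D) : C = D :=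
  by_contra fun h => Set.disjoint_left.1 (hP.2.2.1 C hC D hD h) hvC hvD

theorem IsCMP.not_adj_iff {P : Set (Set V)} (hP : IsCMP G X P) {u v : V} (hu : u ∈ X)
    (hv : v ∈ X) : ¬ G.Adj u v ↔ ∃ C ∈ P, u ∈ C ∧ v ∈ C := by
  rw [hP.2.2.2 u hu v hv, not_not]

theorem cmpAtLeast_iff :
    CMPAtLeast G X p ↔ (G.induce X).IsCompleteMultipartite ∧
      ∃ f : Fin p → V, (∀ i, f i ∈ X) ∧ Pairwise fun i j => G.Adj (f i) (f j) := by
  constructor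
  · rintro ⟨P, hP, f, hfP⟩
    refine ⟨isCompleteMultipartite_induce_iff.2 fun u hu v hv w hw huv hvw => ?_, ?_⟩
    · obtain ⟨C, hC, huC, hvC⟩ := (hP.not_adj_iff hu hv).1 huv
      obtain ⟨D, hD, hvD, hwD⟩ := (hP.not_adj_iff hv hw).1 hvw
      exact (hP.not_adj_iff hu hw).2 ⟨C, hC, huC, hP.eq_of_mem hD hC hvD hvC ▸ hwD⟩
    · choose r hr using fun i => (hP.1 _ (hfP i)).1
      have hrX : ∀ i, r i ∈ X := fun i => (hP.1 _ (hfP i)).2 (hr i)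
      refine ⟨r, hrX, fun i j hij => ?_⟩
      by_contra h
      obtain ⟨C, hC, hi, hj⟩ := (hP.not_adj_iff (hrX i) (hrX j)).1 h
      exact hij (f.injective
        ((hP.eq_of_mem (hfP i) hC (hr i) hi).trans (hP.eq_of_mem hC (hfP j) hj (hr j))))
  · rintro ⟨hX, f, hfX, hf⟩
    rw [isCompleteMultipartite_induce_iff] at hX
    -- the classes are the non-neighbourhoods `N v` of the vertices `v ∈ X`
    set N : V → Set V := fun v => {w ∈ X | ¬ G.Adj v w}
    have hvN : ∀ v ∈ X, v ∈ N v := fun v hv => ⟨hv, G.irrefl⟩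
    have hNsub : ∀ v ∈ X, ∀ v' ∈ X, ∀ t ∈ N v, t ∈ N v' → N v ⊆ N v' :=
      fun v hv v' hv' t ht ht' w hw =>
        ⟨hw.1, hX v' hv' v hv w hw.1 (hX v' hv' t ht.1 v hv ht'.2 fun h => ht.2 h.symm) hw.2⟩
    refine ⟨N '' X, ⟨?_, ?_, ?_, ?_⟩, ⟨fun i => N (f i), fun i j hij => ?_⟩,
      fun i => Set.mem_image_of_mem N (hfX i)⟩
    · rintro _ ⟨v, hv, rfl⟩
      exact ⟨⟨v, hvN v hv⟩, Set.sep_subset _ _⟩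
    · rw [Set.sUnion_image]
      exact Set.Subset.antisymm (Set.iUnion₂_subset fun v _ => Set.sep_subset _ _)
        fun v hv => Set.mem_iUnion₂.2 ⟨v, hv, hvN v hv⟩
    · rintro _ ⟨v, hv, rfl⟩ _ ⟨v', hv', rfl⟩ hne
      exact Set.disjoint_left.2 fun t ht ht' =>
        hne (Set.Subset.antisymm (hNsub v hv v' hv' t ht ht') (hNsub v' hv' v hv t ht' ht))
    · intro u hu v hv
      constructor
      · rintro huv ⟨_, ⟨w, hw, rfl⟩, hwu, hwv⟩
        exact hX u hu w hw v hv (fun h => hwu.2 h.symm) hwv.2 huv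
      · intro h
        by_contra huv
        exact h ⟨N u, Set.mem_image_of_mem N hu, hvN u hu, hv, huv⟩
    · by_contra hne
      have hji : f j ∈ N (f i) := by
        rw [show N (f i) = N (f j) from hij]
        exact hvN (f j) (hfX j)
      exact hji.2 (hf hne)

theorem Cmd.not_adj_trans (hF : Cmd G W p F) {u v w : V} (hu : u ∈ F) (hv : v ∈ F)
    (hw : w ∈ F) : ¬ G.Adj u v → ¬ G.Adj v w → ¬ G.Adj u w :=
  isCompleteMultipartite_induce_iff.1 (cmpAtLeast_iff.1 hF.2.1).1 u hu v hv w hw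

theorem Cmd.exists_adj_adj (hF : Cmd G W 3 F) {a b : V} (ha : a ∈ F) (hb : b ∈ F) :
    ∃ c ∈ F, G.Adj a c ∧ G.Adj b c := by
  obtain ⟨f, hfF, hf⟩ := (cmpAtLeast_iff.1 hF.2.1).2
  have h : ∀ x ∈ F, ∀ i j, i ≠ j → G.Adj x (f i) ∨ G.Adj x (f j) := by
    intro x hx i j hij
    by_contra! h
    exact hF.not_adj_trans (hfF i) hx (hfF j) (fun h' => h.1 h'.symm) h.2 (hf hij)
  rcases h a ha 0 1 (by decide) with ha0 | ha1
  · by_cases hb0 : G.Adj b (f 0)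
    · exact ⟨f 0, hfF 0, ha0, hb0⟩
    rcases h a ha 1 2 (by decide) with ha' | ha'
    · exact ⟨f 1, hfF 1, ha', (h b hb 0 1 (by decide)).resolve_left hb0⟩
    · exact ⟨f 2, hfF 2, ha', (h b hb 0 2 (by decide)).resolve_left hb0⟩
  · by_cases hb1 : G.Adj b (f 1)
    · exact ⟨f 1, hfF 1, ha1, hb1⟩
    rcases h a ha 0 2 (by decide) with ha' | ha'
    · exact ⟨f 0, hfF 0, ha', (h b hb 1 0 (by decide)).resolve_left hb1⟩
    · exact ⟨f 2, hfF 2, ha', (h b hb 1 2 (by decide)).resolve_left hb1⟩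

/-- If the conclusion failed, the non-neighbours of `z` in `F` would form at most one class of
`F`, and `z` could be added to `F`. -/
theorem Cmd.exists_nonadj_nonadj (hF : Cmd G W p F) {z : V} (hzW : z ∈ W) (hzF : z ∉ F)
    (hsplit : ∀ m ∈ F, ∀ n ∈ F, ¬ G.Adj m n → G.Adj z m → G.Adj z n) :
    ∃ u ∈ F, ∃ v ∈ F, ¬ G.Adj z u ∧ ¬ G.Adj z v ∧ G.Adj u v := by
  by_contra! hcon
  obtain ⟨hFW, hcmp, hmax⟩ := hF
  obtain ⟨hCM, f, hfF, hf⟩ := cmpAtLeast_iff.1 hcmp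
  rw [isCompleteMultipartite_induce_iff] at hCM
  have hext : CMPAtLeast G (insert z F) p := by
    refine cmpAtLeast_iff.2 ⟨isCompleteMultipartite_induce_iff.2 ?_, f,
      fun i => Or.inr (hfF i), hf⟩
    rintro u (rfl | hu) v (rfl | hv) w (rfl | hw) huv hvw
    · exact hvw
    · exact hvw
    · exact G.irrefl
    · exact fun h => huv (hsplit w hw v hv (fun h' => hvw h'.symm) h)
    · exact huv
    · exact hcon u hu w hw (fun h => huv h.symm) hvw
    · exact fun h => hvw (hsplit u hu v hv huv h.symm).symm
    · exact hCM u hu v hv w hw huv hvw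
  exact hzF (hmax _ (Set.insert_subset hzW hFW) (Set.subset_insert z F) hext ▸ Set.mem_insert z F)

end CompleteMultipartite

section NoCrossPrison

variable {G : SimpleGraph V} {S F : Set V}

theorem H1.exists_adj_adj_adj (h1 : H1 G S) (h2 : H2 G S) {a b z : V} (hab : G.Adj a b)
    (hza : G.Adj z a) (hzb : G.Adj z b) (haS : a ∉ S) (hbS : b ∉ S) (hzS : z ∉ S) :
    ∃ t, G.Adj a t ∧ G.Adj b t ∧ G.Adj z t := by
  obtain ⟨Q, hQ, haQ, hbQ⟩ := h1 a b hab fun h => haS h.1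
  obtain ⟨s, -, t, -, has, hat, hbs, hbt, hst⟩ := hQ.exists_adj haQ hbQ hab
  by_cases hzs : G.Adj z s
  · exact ⟨s, has, hbs, hzs⟩
  by_cases hzt : G.Adj z t
  · exact ⟨t, hat, hbt, hzt⟩
  by_cases hzs' : z = s
  · exact ⟨t, hat, hbt, hzs' ▸ hst⟩
  by_cases hzt' : z = t
  · exact ⟨s, has, hbs, hzt' ▸ hst.symm⟩
  exact (h2.false_of_three_not_mem
    (inducesPrison_of_adj hab has hat hbs hbt hst hza hzb hzs hzt hzs' hzt')
    haS hbS hzS hab.ne hza.ne.symm hzb.ne.symm).elim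

/-- `z` splits the class of `F` containing `m` and `n`. -/
theorem Cmd.false_of_split_of_adj_adj (h2 : H2 G S) (hF : Cmd G Sᶜ 3 F) {z m n a b : V}
    (hm : m ∈ F) (hn : n ∈ F) (hmn : ¬ G.Adj m n) (hzm : G.Adj z m) (hzn : ¬ G.Adj z n)
    (ha : a ∈ F) (hb : b ∈ F) (hab : G.Adj a b) (hza : G.Adj z a) (hzb : G.Adj z b)
    (ham : G.Adj a m) (hbm : G.Adj b m) : False := by
  have hna : G.Adj n a := by_contra fun h => hF.not_adj_trans hm hn ha hmn h ham.symm
  have hnb : G.Adj n b := by_contra fun h => hF.not_adj_trans hm hn hb hmn h hbm.symm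
  exact h2.false_of_three_not_mem
    (inducesPrison_of_adj hab hza.symm ham hzb.symm hbm hzm hna hnb (fun h => hzn h.symm)
      (fun h => hmn h.symm) (by rintro rfl; exact hmn hzm.symm) (by rintro rfl; exact hzn hzm))
    (hF.1 ha) (hF.1 hb) (hF.1 hn) hab.ne hna.ne.symm hnb.ne.symm

theorem Cmd.false_of_split_of_nonadj (h1 : H1 G S) (h2 : H2 G S) (hF : Cmd G Sᶜ 3 F)
    {z m n a b : V} (hzS : z ∉ S) (hzF : z ∉ F)
    (hm : m ∈ F) (hn : n ∈ F) (hmn : ¬ G.Adj m n) (hzm : G.Adj z m) (hzn : ¬ G.Adj z n)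
    (ha : a ∈ F) (hb : b ∈ F) (hab : G.Adj a b) (hza : G.Adj z a) (hzb : G.Adj z b)
    (ham : ¬ G.Adj a m) : False := by
  have hma : ¬ G.Adj m a := fun h => ham h.symm
  have hbm : G.Adj b m := by_contra fun h => hF.not_adj_trans hb hm ha h hma hab.symm
  obtain ⟨c, hc, hac, hbc⟩ := hF.exists_adj_adj ha hb
  have hcm : G.Adj c m := by_contra fun h => hF.not_adj_trans hc hm ha h hma hac.symm
  have hzc : ¬ G.Adj z c := fun hzc =>
    hF.false_of_split_of_adj_adj h2 hm hn hmn hzm hzn hb hc hbc hzb hzc hbm hcm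
  have hna : ¬ G.Adj n a := hF.not_adj_trans hn hm ha (fun h => hmn h.symm) hma
  have hnb : G.Adj n b :=
    by_contra fun h => hF.not_adj_trans hb hn ha (fun h' => h h'.symm) hna hab.symm
  have hnc : G.Adj n c :=
    by_contra fun h => hF.not_adj_trans hc hn ha (fun h' => h h'.symm) hna hac.symm
  obtain ⟨t, hat, hbt, hzt⟩ := h1.exists_adj_adj_adj h2 hab hza hzb (hF.1 ha) (hF.1 hb) hzS
  have hzc' : z ≠ c := fun h => hzF (h ▸ hc)
  have hzn' : z ≠ n := fun h => hzF (h ▸ hn)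
  by_cases htc : G.Adj t c
  · by_cases htn : G.Adj t n
    · exact h2.false_of_three_not_mem
        (inducesPrison_of_adj hbt hbc hnb.symm htc htn hnc.symm hzb hzt hzc hzn hzc' hzn')
        (hF.1 hb) (hF.1 hc) (hF.1 hn) hbc.ne hnb.ne.symm hnc.ne.symm
    · exact h2.false_of_three_not_mem
        (inducesPrison_of_adj hbc hab.symm hbt hac.symm htc.symm hat hnb hnc hna
          (fun h => htn h.symm) (by rintro rfl; exact hzn hza) (by rintro rfl; exact hzn hzt))
        (hF.1 hb) (hF.1 hc) (hF.1 hn) hbc.ne hnb.ne.symm hnc.ne.symm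
  · exact h2.false_of_three_not_mem
      (inducesPrison_of_adj hab hza.symm hat hzb.symm hbt hzt hac.symm hbc.symm
        (fun h => hzc h.symm) (fun h => htc h.symm) hzc'.symm (by rintro rfl; exact hzc hzt))
      (hF.1 ha) (hF.1 hb) (hF.1 hc) hab.ne hac.ne hbc.ne

theorem Cmd.false_of_adj_adj (h1 : H1 G S) (h2 : H2 G S) (hF : Cmd G Sᶜ 3 F) {z a b : V}
    (hzS : z ∉ S) (hzF : z ∉ F) (ha : a ∈ F) (hb : b ∈ F) (hab : G.Adj a b)
    (hza : G.Adj z a) (hzb : G.Adj z b) : False := by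
  by_cases hsplit : ∃ m ∈ F, ∃ n ∈ F, ¬ G.Adj m n ∧ G.Adj z m ∧ ¬ G.Adj z n
  · obtain ⟨m, hm, n, hn, hmn, hzm, hzn⟩ := hsplit
    by_cases ham : G.Adj a m
    · by_cases hbm : G.Adj b m
      · exact hF.false_of_split_of_adj_adj h2 hm hn hmn hzm hzn ha hb hab hza hzb ham hbm
      · exact hF.false_of_split_of_nonadj h1 h2 hzS hzF hm hn hmn hzm hzn hb ha hab.symm hzb hza
          hbm
    · exact hF.false_of_split_of_nonadj h1 h2 hzS hzF hm hn hmn hzm hzn ha hb hab hza hzb ham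
  push Not at hsplit
  obtain ⟨u, hu, v, hv, hzu, hzv, huv⟩ := hF.exists_nonadj_nonadj hzS hzF hsplit
  have hadj : ∀ w ∈ F, G.Adj z w → ∀ r ∈ F, ¬ G.Adj z r → G.Adj w r :=
    fun w hw hzw r hr hzr => by_contra fun h => hzr (hsplit w hw r hr h hzw)
  exact h2.false_of_three_not_mem
    (inducesPrison_of_adj hab (hadj a ha hza u hu hzu) (hadj a ha hza v hv hzv)
      (hadj b hb hzb u hu hzu) (hadj b hb hzb v hv hzv) huv hza hzb hzu hzv
      (fun h => hzF (h ▸ hu)) (fun h => hzF (h ▸ hv)))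
    (hF.1 ha) (hF.1 hb) hzS hab.ne hza.ne.symm hzb.ne.symm

theorem Cmd.false_of_supPrison (h1 : H1 G S) (h2 : H2 G S) (hF : Cmd G Sᶜ 3 F) {P : Set V}
    (hP : SupPrison G P) {x y z : V} (hx : x ∈ P) (hy : y ∈ P) (hz : z ∈ P) (hxF : x ∈ F)
    (hyF : y ∈ F) (hxy : G.Adj x y) (hzS : z ∉ S) (hzF : z ∉ F) (hzx : ¬ G.Adj z x) :
    False := by
  have hzx' : z ≠ x := fun h => hzF (h ▸ hxF)
  have hzy' : z ≠ y := fun h => hzF (h ▸ hyF)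
  -- `P` has three vertices outside `S`, so it is not an induced prison and `zx` is its only
  -- non-adjacent pair
  have huniq : ∀ c ∈ P, ∀ d ∈ P, c ≠ d → ¬ G.Adj c d →
      (c = z ∧ d = x) ∨ (c = x ∧ d = z) :=
    fun c hc d hd hcd h => Sym2.eq_iff.1 <| by_contra fun hne =>
      h2.false_of_three_not_mem (hP.inducesPrison_of_nonadj hc hd hz hx hcd hzx' h hzx hne)
        (hF.1 hxF) (hF.1 hyF) hzS hxy.ne hzx'.symm hzy'.symm hx hy hz
  have hzy : G.Adj z y := by
    by_contra h
    rcases huniq z hz y hy hzy' h with ⟨-, rfl⟩ | ⟨h', -⟩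
    exacts [G.irrefl hxy, hzx' h']
  have hz_of_x : ∀ r ∈ P, G.Adj x r → G.Adj z r := by
    intro r hr hxr
    by_contra h
    rcases huniq z hz r hr (by rintro rfl; exact hzx hxr.symm) h with ⟨-, rfl⟩ | ⟨h', -⟩
    exacts [G.irrefl hxr, hzx' h']
  obtain ⟨s, hs, t, ht, hxs, hxt, hys, hyt, hst⟩ :=
    StrictSupPrison.exists_adj ⟨hP.1, z, x, huniq⟩ hx hy hxy
  obtain ⟨c, hc, hxc, hyc⟩ := hF.exists_adj_adj hxF hyF
  have hzc : ¬ G.Adj z c := fun h => hF.false_of_adj_adj h1 h2 hzS hzF hyF hc hyc hzy h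
  have hcr : ∀ r, G.Adj x r → G.Adj y r → G.Adj z r → ¬ G.Adj c r :=
    fun r hxr hyr hzr h =>
      h2.false_of_three_not_mem
        (inducesPrison_of_adj hyr hxy.symm hyc hxr.symm h.symm hxc hzy hzr hzx hzc hzx'
          (fun h => hzF (h ▸ hc)))
        (hF.1 hyF) (hF.1 hxF) hzS hxy.ne.symm hzy'.symm hzx'.symm
  exact h2.false_of_three_not_mem
    (inducesPrison_of_adj hxy hxs hxt hys hyt hst hxc.symm hyc.symm
      (hcr s hxs hys (hz_of_x s hs hxs)) (hcr t hxt hyt (hz_of_x t ht hxt))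
      (fun h => hzc (h ▸ hz_of_x s hs hxs)) (fun h => hzc (h ▸ hz_of_x t ht hxt)))
    (hF.1 hxF) (hF.1 hyF) (hF.1 hc) hxy.ne hxc.ne hyc.ne

end NoCrossPrison

theorem noCrossPrison3_general {V : Type*} (G : SimpleGraph V)
    (S : Set V) (h1 : H1 G S) (h2 : H2 G S)
    (F : Set V) (hF : Cmd G Sᶜ 3 F)
    (P : Set V) (hP : SupPrison G P)
    (hedge : ∃ x y : V, x ∈ P ∧ y ∈ P ∧ x ∈ F ∧ y ∈ F ∧ G.Adj x y) :
    P ⊆ S ∪ F := by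
  obtain ⟨x, y, hxP, hyP, hxF, hyF, hxy⟩ := hedge
  intro z hzP
  by_contra hz
  rw [Set.mem_union, not_or] at hz
  by_cases hzxy : G.Adj z x ∧ G.Adj z y
  · exact hF.false_of_adj_adj h1 h2 hz.1 hz.2 hxF hyF hxy hzxy.1 hzxy.2
  rcases not_and_or.1 hzxy with hzx | hzy
  · exact hF.false_of_supPrison h1 h2 hP hxP hyP hzP hxF hyF hxy hz.1 hz.2 hzx
  · exact hF.false_of_supPrison h1 h2 hP hyP hxP hzP hyF hxF hxy.symm hz.1 hz.2 hzy

/-- Under (H1) and (H2), every supergraph of a prison in `G`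
containing an edge with both endpoints in some `F ∈ cmd₃(G−S)` is contained in
`S ∪ F`. -/
theorem noCrossPrison3 {V : Type*} [Fintype V] (G : SimpleGraph V)
    (S : Set V) (h1 : H1 G S) (h2 : H2 G S)
    (F : Set V) (hF : Cmd G Sᶜ 3 F)
    (P : Set V) (hP : SupPrison G P)
    (hedge : ∃ x y : V, x ∈ P ∧ y ∈ P ∧ x ∈ F ∧ y ∈ F ∧ G.Adj x y) :
    P ⊆ S ∪ F :=
  noCrossPrison3_general G S h1 h2 F hF P hP hedge

end PrisonFreePaper
end

section
/- Let G be a graph and S⊆V(G) a set satisfying (H1) and (H2). Let e be an edge of G[S] with B_e nonempty, and let s∈S. Then either N(s) contains all of V(B_e), or N(s) intersects at most one of the two classes of the complete bipartite graph induced by V(B_e) in G−S. -/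
namespace PrisonFreePaper

variable {V : Type*}

/-!
`V(B_e)` induces a complete bipartite graph: a vertex in a third class would close a triangle
on an edge of `B`, which lies in no triangle of `G − S`. Suppose `s` misses some `x ∈ V(B_e)`
but sees `p` in the class of `x` and `q` in the other class. If `s` sees `a`, then the clique
`{a, q, p, s}` with `x` attached to `a` and `q` is a prison whose only possible edge inside `S`
is `sa`; likewise for `b`. Otherwise the clique `{p, q, a, b}` with `s` attached to `p` and `q`
is a prison whose only edge inside `S` is `ab`. Each case contradicts (H2).
-/

section Multipartite

variable {G : SimpleGraph V} {F : Set V} {P : Set (Set V)} {C D : Set V} {u v : V}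

theorem IsCMP.exists_mem_class (hP : IsCMP G F P) (hu : u ∈ F) : ∃ C ∈ P, u ∈ C := by
  rwa [← hP.2.1] at hu

theorem IsCMP.mem_of_mem_class (hP : IsCMP G F P) (hC : C ∈ P) (hu : u ∈ C) : u ∈ F :=
  (hP.1 C hC).2 hu

theorem IsCMP.not_adj_of_mem_class (hP : IsCMP G F P) (hC : C ∈ P) (hu : u ∈ C) (hv : v ∈ C) :
    ¬ G.Adj u v := fun h =>
  (hP.2.2.2 u (hP.mem_of_mem_class hC hu) v (hP.mem_of_mem_class hC hv)).mp h ⟨C, hC, hu, hv⟩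

theorem IsCMP.adj_of_ne_class (hP : IsCMP G F P) (hC : C ∈ P) (hD : D ∈ P) (hCD : C ≠ D)
    (hu : u ∈ C) (hv : v ∈ D) : G.Adj u v := by
  rw [hP.2.2.2 u (hP.mem_of_mem_class hC hu) v (hP.mem_of_mem_class hD hv)]
  rintro ⟨E, hE, huE, hvE⟩
  have hCE : C = E := by_contra fun h => Set.disjoint_left.mp (hP.2.2.1 C hC E hE h) hu huE
  have hDE : D = E := by_contra fun h => Set.disjoint_left.mp (hP.2.2.1 D hD E hE h) hv hvE
  exact hCD (hCE.trans hDE.symm)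

theorem IsCMP.eq_or_eq_of_adj (hP : IsCMP G F P) (hC : C ∈ P) (hD : D ∈ P) (hu : u ∈ C)
    (hv : v ∈ D) (htri : ∀ w ∈ F, ¬ (G.Adj w u ∧ G.Adj w v)) : ∀ E ∈ P, E = C ∨ E = D := by
  intro E hE
  by_contra! hne
  obtain ⟨w, hw⟩ := (hP.1 E hE).1
  exact htri w (hP.mem_of_mem_class hE hw)
    ⟨hP.adj_of_ne_class hE hC hne.1 hw hu, hP.adj_of_ne_class hE hD hne.2 hw hv⟩

end Multipartite

section BVerts

variable {G : SimpleGraph V} {S : Set V} {a b x : V}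

theorem mk_mem_edgesWithin {X : Set V} {u v : V} :
    s(u, v) ∈ edgesWithin G X ↔ G.Adj u v ∧ u ∈ X ∧ v ∈ X :=
  Iff.rfl

theorem mem_BVerts (hx : x ∈ BVerts G S a b) : x ∉ S ∧ G.Adj x a ∧ G.Adj x b := by
  obtain ⟨f, ⟨⟨hf, -⟩, hfab⟩, hxf⟩ := hx
  obtain ⟨y, rfl⟩ := Sym2.mem_iff_exists.mp hxf
  exact ⟨(mk_mem_edgesWithin.mp hf).2.1, hfab x hxf⟩

theorem exists_BVerts_partner (hx : x ∈ BVerts G S a b) :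
    ∃ y ∈ BVerts G S a b, G.Adj x y ∧ ∀ w ∉ S, ¬ (G.Adj w x ∧ G.Adj w y) := by
  obtain ⟨f, hf, hxf⟩ := hx
  obtain ⟨y, rfl⟩ := Sym2.mem_iff_exists.mp hxf
  obtain ⟨⟨hxy, hno⟩, -⟩ := id hf
  exact ⟨y, ⟨s(x, y), hf, Sym2.mem_mk_right x y⟩, (mk_mem_edgesWithin.mp hxy).1,
    fun w hw hwxy => hno ⟨w, hw, Sym2.forall_mem_pair.mpr hwxy⟩⟩

end BVerts

section Prison

variable {G : SimpleGraph V} {S T : Set V} {a b p q r s x : V}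

theorem inducesPrison_of_adj_s19 {v₀ v₁ v₂ v₃ v₄ : V}
    (h01 : G.Adj v₀ v₁) (h02 : G.Adj v₀ v₂) (h03 : G.Adj v₀ v₃)
    (h12 : G.Adj v₁ v₂) (h13 : G.Adj v₁ v₃) (h23 : G.Adj v₂ v₃)
    (h40 : G.Adj v₄ v₀) (h41 : G.Adj v₄ v₁) (h42 : ¬ G.Adj v₄ v₂) (h43 : ¬ G.Adj v₄ v₃)
    (n42 : v₄ ≠ v₂) (n43 : v₄ ≠ v₃) :
    InducesPrison G {v₀, v₁, v₂, v₃, v₄} := by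
  have n01 := h01.ne; have n02 := h02.ne; have n03 := h03.ne
  have n12 := h12.ne; have n13 := h13.ne; have n23 := h23.ne
  have n40 := h40.ne; have n41 := h41.ne
  have h04 := h40.symm; have h14 := h41.symm
  have h24 : ¬ G.Adj v₂ v₄ := fun h => h42 h.symm
  have h34 : ¬ G.Adj v₃ v₄ := fun h => h43 h.symm
  refine ⟨⟨![v₀, v₁, v₂, v₃, v₄], ?_⟩, ?_, ?_⟩
  · intro i j hij
    fin_cases i <;> fin_cases j <;> simp_all
  · show Set.range ![v₀, v₁, v₂, v₃, v₄] = _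
    simp only [Matrix.range_cons, Matrix.range_empty, Set.union_empty, Set.singleton_union]
  · intro i j
    show G.Adj (![v₀, v₁, v₂, v₃, v₄] i) (![v₀, v₁, v₂, v₃, v₄] j) ↔ _
    fin_cases i <;> fin_cases j <;> simp [prison, G.adj_comm, *]

theorem H2.not_subsingleton (h2 : H2 G S) {P : Set V} (hP : InducesPrison G P) :
    ¬ (edgesWithin G (P ∩ S)).Subsingleton := fun h => by
  obtain ⟨e₁, e₂, hne, he₁, he₂⟩ := h2 P hP
  exact hne (h he₁ he₂)

theorem edgesWithin_subsingleton_of_subset_pair (hT : T ⊆ {p, q}) :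
    (edgesWithin G T).Subsingleton := by
  refine Set.subsingleton_of_forall_eq s(p, q) (Sym2.ind fun u v huv => ?_)
  obtain ⟨huv, hu, hv⟩ := mk_mem_edgesWithin.mp huv
  have := huv.ne
  rcases hT hu with rfl | rfl <;> rcases hT hv with rfl | rfl <;> simp_all [Sym2.eq_swap]

theorem edgesWithin_subsingleton_of_subset_triple (hT : T ⊆ {p, q, r})
    (hrp : ¬ G.Adj r p) (hrq : ¬ G.Adj r q) : (edgesWithin G T).Subsingleton := by
  refine Set.subsingleton_of_forall_eq s(p, q) (Sym2.ind fun u v huv => ?_)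
  obtain ⟨huv, hu, hv⟩ := mk_mem_edgesWithin.mp huv
  have := huv.ne
  rcases hT hu with rfl | rfl | rfl <;> rcases hT hv with rfl | rfl | rfl <;>
    simp_all [Sym2.eq_swap, G.adj_comm]

theorem H2.not_adj_of_clique_pendant (h2 : H2 G S) (hp : p ∉ S) (hq : q ∉ S) (hx : x ∉ S)
    (hpa : G.Adj p a) (hqa : G.Adj q a) (hxa : G.Adj x a) (hpq : G.Adj p q)
    (hsp : G.Adj s p) (hsq : G.Adj s q) (hxq : G.Adj x q) (hxp : ¬ G.Adj x p)
    (hsx : ¬ G.Adj s x) : ¬ G.Adj s a := fun hsa => by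
  have hprison : InducesPrison G {a, q, p, s, x} :=
    inducesPrison_of_adj_s19 hqa.symm hpa.symm hsa.symm hpq.symm hsq.symm hsp.symm hxa hxq hxp
      (fun h => hsx h.symm) (fun h => hsx (h ▸ hsp)) (fun h => hxp (h ▸ hsp))
  refine h2.not_subsingleton hprison
    (edgesWithin_subsingleton_of_subset_pair (p := s) (q := a) ?_)
  rintro z ⟨hz, hzS⟩
  rcases hz with rfl | rfl | rfl | rfl | rfl <;> simp_all

theorem H2.adj_of_adj_of_common_neighbors (h2 : H2 G S) (hab : G.Adj a b)
    (hp : p ∉ S ∧ G.Adj p a ∧ G.Adj p b) (hq : q ∉ S ∧ G.Adj q a ∧ G.Adj q b)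
    (hx : x ∉ S ∧ G.Adj x a ∧ G.Adj x b) (hpq : G.Adj p q)
    (hsp : G.Adj s p) (hsq : G.Adj s q) (hxq : G.Adj x q) (hsx : ¬ G.Adj s x) :
    G.Adj x p := by
  obtain ⟨hpS, hpa, hpb⟩ := hp
  obtain ⟨hqS, hqa, hqb⟩ := hq
  obtain ⟨hxS, hxa, hxb⟩ := hx
  by_contra hxp
  have hsa := h2.not_adj_of_clique_pendant hpS hqS hxS hpa hqa hxa hpq hsp hsq hxq hxp hsx
  have hsb := h2.not_adj_of_clique_pendant hpS hqS hxS hpb hqb hxb hpq hsp hsq hxq hxp hsx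
  have hprison : InducesPrison G {p, q, a, b, s} :=
    inducesPrison_of_adj_s19 hpq hpa hpb hqa hqb hab hsp hsq hsa hsb
      (fun h => hsx (h ▸ hxa.symm)) (fun h => hsx (h ▸ hxb.symm))
  refine h2.not_subsingleton hprison
    (edgesWithin_subsingleton_of_subset_triple (p := a) (q := b) (r := s) ?_ hsa hsb)
  rintro z ⟨hz, hzS⟩
  rcases hz with rfl | rfl | rfl | rfl | rfl <;> simp_all

end Prison

theorem consistentFs2_general {V : Type*} (G : SimpleGraph V)
    (S : Set V) (h2 : H2 G S)
    (a b : V) (hab : G.Adj a b)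
    (s : V) :
    (∀ x ∈ BVerts G S a b, G.Adj s x) ∨
    (∀ P : Set (Set V), IsCMP G (BVerts G S a b) P →
      MeetsAtMostOneClass G P s) := by
  refine or_iff_not_imp_left.mpr fun hall P hP C hC D hD ⟨c, hcC, hsc⟩ ⟨d, hdD, hsd⟩ =>
    by_contra fun hCD => ?_
  obtain ⟨x, hx, hsx⟩ := not_forall₂.mp hall
  obtain ⟨E, hE, hxE⟩ := hP.exists_mem_class hx
  obtain ⟨y, hy, hxy, htri⟩ := exists_BVerts_partner hx
  obtain ⟨F, hF, hyF⟩ := hP.exists_mem_class hy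
  have hclass := hP.eq_or_eq_of_adj hE hF hxE hyF fun w hw => htri w (mem_BVerts hw).1
  have hxCD : E = C ∨ E = D := by
    rcases hclass C hC with h | hCF
    · exact .inl h.symm
    rcases hclass D hD with h | hDF
    · exact .inr h.symm
    exact absurd (hCF.trans hDF.symm) hCD
  have key : ∀ {p q : V} {D : Set V}, D ∈ P → E ≠ D → p ∈ E → q ∈ D →
      G.Adj s p → G.Adj s q → False := fun hD hED hpE hqD hsp hsq =>
    hP.not_adj_of_mem_class hE hxE hpE <|
      h2.adj_of_adj_of_common_neighbors hab (mem_BVerts (hP.mem_of_mem_class hE hpE))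
        (mem_BVerts (hP.mem_of_mem_class hD hqD)) (mem_BVerts hx)
        (hP.adj_of_ne_class hE hD hED hpE hqD) hsp hsq (hP.adj_of_ne_class hE hD hED hxE hqD) hsx
  rcases hxCD with rfl | rfl
  exacts [key hD hCD hcC hdD hsc hsd, key hC (Ne.symm hCD) hdD hcC hsd hsc]

/-- Under (H1) and (H2), for every edge `ab` of `G[S]` with
`B_{ab}` nonempty and every `s ∈ S`: either `N(s)` contains all of `V(B_{ab})`, or
`N(s)` intersects at most one of the two classes of the complete bipartite graph
induced by `V(B_{ab})`. -/
theorem consistentFs2 {V : Type*} [Fintype V] (G : SimpleGraph V)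
    (S : Set V) (h1 : H1 G S) (h2 : H2 G S)
    (a b : V) (ha : a ∈ S) (hb : b ∈ S) (hab : G.Adj a b)
    (hne : (BOf G S a b).Nonempty) (s : V) (hs : s ∈ S) :
    (∀ x ∈ BVerts G S a b, G.Adj s x) ∨
    (∀ P : Set (Set V), IsCMP G (BVerts G S a b) P →
      MeetsAtMostOneClass G P s) :=
  consistentFs2_general G S h2 a b hab s

end PrisonFreePaper
end
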